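/- (Differentiation under the integral and posterior-mean form of the score, used in Eq. (9).) Assume additionally that ∫ ‖x₀‖ q₀(x₀) dx₀ < ∞. Then q is differentiable at every x ∈ ℝ^d with ∇q(x) = ∫ ((α x₀ − x)/σ²) · k(x, x₀) q₀(x₀) dx₀; consequently, since q(x) > 0, ∇ log q(x) = (1/σ²) · ( α · ∫ x₀ · (k(x, x₀) q₀(x₀) / q(x)) dx₀ − x ), i.e., the score of the diffused marginal is determined by the posterior mean of the clean sample given the noised sample x. -/

import Mathlib

/-!
Every `x₀`-section of the integrand `k x x₀ q₀ x₀` is smooth in `x`, with gradient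
`((α x₀ - x) / σ²) k x x₀ q₀ x₀`. Since `t ↦ t exp (-t² / 2σ²)` is bounded by `σ`, these gradients
are dominated by the integrable function `(2πσ²)^(-d/2) |q₀| / σ`, so the integral may be
differentiated under the integral sign. The first moment of `q₀` makes the expansion of
`α x₀ - x` under the integral legitimate, and dividing by `q x` turns the result into the
posterior-mean form of the score.
-/

open MeasureTheory Real InnerProductSpace

lemma mul_exp_neg_sq_div_le {σ : ℝ} (hσ : 0 < σ) (t : ℝ) :
    t * exp (-t ^ 2 / (2 * σ ^ 2)) ≤ σ := by
  have hexp : t / σ ≤ exp (t ^ 2 / (2 * σ ^ 2)) := by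
    calc t / σ ≤ t ^ 2 / (2 * σ ^ 2) + 1 := by
          field_simp
          nlinarith [sq_nonneg (t - σ)]
      _ ≤ _ := add_one_le_exp _
  rw [neg_div, exp_neg, ← div_eq_mul_inv, div_le_iff₀ (exp_pos _)]
  rwa [div_le_iff₀ hσ, mul_comm] at hexp

variable {E : Type*} [NormedAddCommGroup E] [InnerProductSpace ℝ E]

noncomputable def gaussKernel (c α σ : ℝ) (x x₀ : E) : ℝ :=
  c * exp (-‖x - α • x₀‖ ^ 2 / (2 * σ ^ 2))

section Kernel

variable (c α : ℝ)

lemma abs_gaussKernel_le (σ : ℝ) (x x₀ : E) : |gaussKernel c α σ x x₀| ≤ |c| := by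
  rw [gaussKernel, abs_mul, abs_of_pos (exp_pos _)]
  refine mul_le_of_le_one_right (abs_nonneg c) (exp_le_one_iff.mpr ?_)
  exact div_nonpos_of_nonpos_of_nonneg (neg_nonpos.mpr (by positivity)) (by positivity)

lemma abs_gaussKernel_mul_norm_le {σ : ℝ} (hσ : 0 < σ) (x x₀ : E) :
    |gaussKernel c α σ x x₀| * ‖α • x₀ - x‖ ≤ |c| * σ := by
  rw [gaussKernel, abs_mul, abs_of_pos (exp_pos _), norm_sub_rev, mul_assoc, mul_comm (exp _)]
  exact mul_le_mul_of_nonneg_left (mul_exp_neg_sq_div_le hσ _) (abs_nonneg c)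

lemma continuous_gaussKernel (σ : ℝ) (x : E) : Continuous (gaussKernel c α σ x) := by
  unfold gaussKernel; fun_prop

lemma hasGradientAt_gaussKernel [CompleteSpace E] (σ : ℝ) (x x₀ : E) :
    HasGradientAt (fun y => gaussKernel c α σ y x₀)
      ((gaussKernel c α σ x x₀ / σ ^ 2) • (α • x₀ - x)) x := by
  have hfun : (fun y => gaussKernel c α σ y x₀) =
      fun y => c * exp (-(2 * σ ^ 2)⁻¹ * ‖y - α • x₀‖ ^ 2) := by
    ext y
    rw [gaussKernel, neg_div, div_eq_inv_mul, neg_mul]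
  have h := ((((hasFDerivAt_id x).sub_const (α • x₀)).norm_sq.const_mul
    (-(2 * σ ^ 2)⁻¹)).exp).const_mul c
  rw [hasGradientAt_iff_hasFDerivAt, hfun]
  refine h.congr_fderiv (ContinuousLinearMap.ext fun v => ?_)
  simp only [congrFun hfun x, toDual_apply_apply, smul_apply,
    ContinuousLinearMap.comp_id, coe_innerSL_apply, map_sub, map_smul, smul_eq_mul, nsmul_eq_mul,
    Nat.cast_ofNat, id_eq, sub_apply]
  ring

end Kernel

section Integral

variable [MeasurableSpace E] [BorelSpace E]
  {μ : Measure E} {f : E → ℝ} (c α : ℝ)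

lemma integrable_gaussKernel_mul (σ : ℝ) (hf : Integrable f μ) (x : E) :
    Integrable (fun x₀ => gaussKernel c α σ x x₀ * f x₀) μ := by
  refine (hf.abs.const_mul |c|).mono'
    ((continuous_gaussKernel c α σ x).aestronglyMeasurable.mul hf.aestronglyMeasurable)
    (ae_of_all _ fun x₀ => ?_)
  rw [norm_mul, Real.norm_eq_abs, Real.norm_eq_abs]
  exact mul_le_mul_of_nonneg_right (abs_gaussKernel_le c α σ x x₀) (abs_nonneg _)

variable [SecondCountableTopology E]

lemma integrable_gaussKernel_mul_smul (σ : ℝ) (hf : Integrable f μ)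
    (hf_moment : Integrable (fun x₀ => ‖x₀‖ * f x₀) μ) (x : E) :
    Integrable (fun x₀ => (gaussKernel c α σ x x₀ * f x₀) • x₀) μ := by
  refine (hf_moment.abs.const_mul |c|).mono'
    ((integrable_gaussKernel_mul c α σ hf x).aestronglyMeasurable.smul aestronglyMeasurable_id)
    (ae_of_all _ fun x₀ => ?_)
  rw [norm_smul, Real.norm_eq_abs, abs_mul, abs_mul, abs_norm]
  calc |gaussKernel c α σ x x₀| * |f x₀| * ‖x₀‖ ≤ |c| * |f x₀| * ‖x₀‖ := by
        gcongr ?_ * _ * _; exact abs_gaussKernel_le c α σ x x₀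
    _ = |c| * (‖x₀‖ * |f x₀|) := by ring

variable [CompleteSpace E]

lemma hasGradientAt_integral_gaussKernel_mul {σ : ℝ} (hσ : 0 < σ) (hf : Integrable f μ)
    (x : E) :
    HasGradientAt (fun y => ∫ x₀, gaussKernel c α σ y x₀ * f x₀ ∂μ)
      (∫ x₀, (gaussKernel c α σ x x₀ * f x₀ / σ ^ 2) • (α • x₀ - x) ∂μ) x := by
  let F' : E → E → StrongDual ℝ E := fun y x₀ =>
    toDual ℝ E ((gaussKernel c α σ y x₀ * f x₀ / σ ^ 2) • (α • x₀ - y))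
  have hF' : ∀ y x₀, HasFDerivAt (fun z => gaussKernel c α σ z x₀ * f x₀) (F' y x₀) y := by
    intro y x₀
    refine ((hasGradientAt_gaussKernel c α σ y x₀).hasFDerivAt.mul_const (f x₀)).congr_fderiv
      ?_
    rw [← map_smul, smul_smul]
    congr 2
    ring
  have hF'_le : ∀ y x₀, ‖F' y x₀‖ ≤ |c| / σ * |f x₀| := by
    intro y x₀
    rw [LinearIsometryEquiv.norm_map, norm_smul, Real.norm_eq_abs, abs_div, abs_mul,
      abs_of_pos (by positivity : (0:ℝ) < σ ^ 2)]
    calc |gaussKernel c α σ y x₀| * |f x₀| / σ ^ 2 * ‖α • x₀ - y‖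
        = |f x₀| / σ ^ 2 * (|gaussKernel c α σ y x₀| * ‖α • x₀ - y‖) := by ring
      _ ≤ |f x₀| / σ ^ 2 * (|c| * σ) :=
          mul_le_mul_of_nonneg_left (abs_gaussKernel_mul_norm_le c α hσ y x₀) (by positivity)
      _ = |c| / σ * |f x₀| := by field_simp
  have hmain := hasFDerivAt_integral_of_dominated_of_fderiv_le (μ := μ) (F' := F')
    (bound := fun x₀ => |c| / σ * |f x₀|) (Metric.ball_mem_nhds x one_pos)
    (.of_forall fun y => (integrable_gaussKernel_mul c α σ hf y).aestronglyMeasurable)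
    (integrable_gaussKernel_mul c α σ hf x)
    (by have := continuous_gaussKernel c α σ x; have := hf.aestronglyMeasurable; fun_prop)
    (ae_of_all _ fun x₀ y _ => hF'_le y x₀) (hf.abs.const_mul _)
    (ae_of_all _ fun x₀ y _ => hF' y x₀)
  have hcomm : ∫ x₀, F' x x₀ ∂μ =
      toDual ℝ E (∫ x₀, (gaussKernel c α σ x x₀ * f x₀ / σ ^ 2) • (α • x₀ - x) ∂μ) :=
    (toDual ℝ E).toLinearIsometry.integral_comp_comm _
  rwa [hasGradientAt_iff_hasFDerivAt, ← hcomm]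

lemma integral_gaussKernel_mul_smul_sub (σ : ℝ) (hf : Integrable f μ)
    (hf_moment : Integrable (fun x₀ => ‖x₀‖ * f x₀) μ) (x : E) :
    ∫ x₀, (gaussKernel c α σ x x₀ * f x₀ / σ ^ 2) • (α • x₀ - x) ∂μ =
      (1 / σ ^ 2) • (α • ∫ x₀, (gaussKernel c α σ x x₀ * f x₀) • x₀ ∂μ -
        (∫ x₀, gaussKernel c α σ x x₀ * f x₀ ∂μ) • x) := by
  have hexpand : ∀ x₀, (gaussKernel c α σ x x₀ * f x₀ / σ ^ 2) • (α • x₀ - x) =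
      (1 / σ ^ 2) • (α • ((gaussKernel c α σ x x₀ * f x₀) • x₀) -
        (gaussKernel c α σ x x₀ * f x₀) • x) := fun x₀ => by
    module
  simp_rw [hexpand]
  have hmoment : Integrable (fun x₀ => α • ((gaussKernel c α σ x x₀ * f x₀) • x₀)) μ :=
    (integrable_gaussKernel_mul_smul c α σ hf hf_moment x).smul α
  rw [integral_smul,
    integral_sub hmoment ((integrable_gaussKernel_mul c α σ hf x).smul_const x),
    integral_smul, integral_smul_const]

lemma hasGradientAt_log_integral_gaussKernel_mul {σ : ℝ} (hσ : 0 < σ) (hf : Integrable f μ)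
    (hf_moment : Integrable (fun x₀ => ‖x₀‖ * f x₀) μ) {x : E}
    (hx : ∫ x₀, gaussKernel c α σ x x₀ * f x₀ ∂μ ≠ 0) :
    HasGradientAt (fun y => log (∫ x₀, gaussKernel c α σ y x₀ * f x₀ ∂μ))
      ((1 / σ ^ 2) • (α • ∫ x₀, (gaussKernel c α σ x x₀ * f x₀ /
        ∫ x₀, gaussKernel c α σ x x₀ * f x₀ ∂μ) • x₀ ∂μ - x)) x := by
  have hlog := (hasGradientAt_integral_gaussKernel_mul c α hσ hf x).hasFDerivAt.log hx
  rw [← map_smul, integral_gaussKernel_mul_smul_sub c α σ hf hf_moment x] at hlog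
  set Z := ∫ x₀, gaussKernel c α σ x x₀ * f x₀ ∂μ
  have hposterior : ∫ x₀, (gaussKernel c α σ x x₀ * f x₀ / Z) • x₀ ∂μ =
      Z⁻¹ • ∫ x₀, (gaussKernel c α σ x x₀ * f x₀) • x₀ ∂μ := by
    rw [← integral_smul]
    simp_rw [smul_smul, div_eq_inv_mul]
  have hnormalize : ∀ v : E, Z⁻¹ • (1 / σ ^ 2) • (α • v - Z • x) =
      (1 / σ ^ 2) • (α • Z⁻¹ • v - x) := fun v => by
    rw [smul_comm, smul_sub, smul_comm Z⁻¹ α, inv_smul_smul₀ hx]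
  rwa [hasGradientAt_iff_hasFDerivAt, hposterior, ← hnormalize]

end Integral

theorem stmt_7_general
    (d : ℕ)
    (q₀ : EuclideanSpace ℝ (Fin d) → ℝ)
    (hq₀_int : Integrable q₀)
    (α σ : ℝ) (hσ : 0 < σ)
    (k : EuclideanSpace ℝ (Fin d) → EuclideanSpace ℝ (Fin d) → ℝ)
    (hk : ∀ x x₀, k x x₀ =
      (2 * π * σ ^ 2) ^ (-(d : ℝ) / 2) * Real.exp (-‖x - α • x₀‖ ^ 2 / (2 * σ ^ 2)))
    (q : EuclideanSpace ℝ (Fin d) → ℝ)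
    (hq_def : ∀ x, q x = ∫ x₀, k x x₀ * q₀ x₀)
    (hq_pos : ∀ x, 0 < q x)
    (hmoment : Integrable (fun x₀ => ‖x₀‖ * q₀ x₀)) :
    ∀ x : EuclideanSpace ℝ (Fin d),
      DifferentiableAt ℝ q x ∧
      gradient q x = ∫ x₀, ((k x x₀ * q₀ x₀) / σ ^ 2) • (α • x₀ - x) ∧
      gradient (fun y => Real.log (q y)) x =
        (1 / σ ^ 2) • (α • (∫ x₀, (k x x₀ * q₀ x₀ / q x) • x₀) - x) := by
  intro x
  set c := (2 * π * σ ^ 2) ^ (-(d : ℝ) / 2)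
  obtain rfl : k = gaussKernel c α σ := funext fun y => funext (hk y)
  obtain rfl : q = fun y => ∫ x₀, gaussKernel c α σ y x₀ * q₀ x₀ := funext hq_def
  have hgrad := hasGradientAt_integral_gaussKernel_mul c α hσ hq₀_int x
  exact ⟨hgrad.differentiableAt, hgrad.gradient,
    (hasGradientAt_log_integral_gaussKernel_mul c α hσ hq₀_int hmoment (hq_pos x).ne').gradient⟩

/-- Differentiation under the integral and posterior-mean form of the score:
assuming `∫ ‖x₀‖ q₀ x₀ dx₀ < ∞`, `q` is differentiable everywhere with
`∇ q x = ∫ ((α • x₀ - x) / σ²) * k x x₀ * q₀ x₀ dx₀`, and since `q x > 0`,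
`∇ log q x = (1/σ²) • (α • ∫ (k x x₀ * q₀ x₀ / q x) • x₀ dx₀ - x)`. -/
theorem stmt_7
    (d : ℕ) (hd : 1 ≤ d)
    (q₀ : EuclideanSpace ℝ (Fin d) → ℝ)
    (hq₀_meas : Measurable q₀)
    (hq₀_nonneg : ∀ x₀, 0 ≤ q₀ x₀)
    (hq₀_int : Integrable q₀)
    (hq₀_one : ∫ x₀, q₀ x₀ = 1)
    (α σ : ℝ) (hσ : 0 < σ)
    (k : EuclideanSpace ℝ (Fin d) → EuclideanSpace ℝ (Fin d) → ℝ)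
    (hk : ∀ x x₀, k x x₀ =
      (2 * π * σ ^ 2) ^ (-(d : ℝ) / 2) * Real.exp (-‖x - α • x₀‖ ^ 2 / (2 * σ ^ 2)))
    (q : EuclideanSpace ℝ (Fin d) → ℝ)
    (hq_def : ∀ x, q x = ∫ x₀, k x x₀ * q₀ x₀)
    (hq_pos : ∀ x, 0 < q x)
    (hmoment : Integrable (fun x₀ => ‖x₀‖ * q₀ x₀)) :
    ∀ x : EuclideanSpace ℝ (Fin d),
      DifferentiableAt ℝ q x ∧
      gradient q x = ∫ x₀, ((k x x₀ * q₀ x₀) / σ ^ 2) • (α • x₀ - x) ∧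
      gradient (fun y => Real.log (q y)) x =
        (1 / σ ^ 2) • (α • (∫ x₀, (k x x₀ * q₀ x₀ / q x) • x₀) - x) :=
  stmt_7_general d q₀ hq₀_int α σ hσ k hk q hq_def hq_pos hmoment
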